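/- With I ~ I(n,D,p) an Erdős–Rényi random monomial ideal and q = 1-p, the expected dimension of the degree-d component of S/I, for d ≥ 1, equals q^{-1}·∑_{|a|=d} q^{(a_1+1)···(a_n+1) - ∑_{j=D+1}^{|a|} h_{B_a}(j)} where B_a = S/⟨x_1^{a_1+1},...,x_n^{a_n+1}⟩ and the inner sum is zero when |a| ≤ D. -/

import Mathlib

open MvPolynomial

/-- The finite set of exponent vectors of the monomials of degree exactly `D`
in `n` variables. -/
noncomputable def Mon (n D : ℕ) : Finset (Fin n →₀ ℕ) :=
  (Finset.Nat.antidiagonalTuple n D).map Finsupp.equivFunOnFinite.symm.toEmbedding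

/-- The finite set of exponent vectors of the non-constant monomials of degree at most `D`
in `n` variables (the candidate generators of an Erdős–Rényi random monomial ideal). -/
noncomputable def MonLE (n D : ℕ) : Finset (Fin n →₀ ℕ) :=
  (Finset.Icc 1 D).biUnion fun j => Mon n j

/-- The monomial ideal generated by a finite set of exponent vectors. -/
noncomputable def spanOf (K : Type*) [Field K] {n : ℕ} (G : Finset (Fin n →₀ ℕ)) :
    Ideal (MvPolynomial (Fin n) K) :=
  Ideal.span ((fun b => MvPolynomial.monomial b (1 : K)) '' ↑G)

/-- The complete intersection `⟨x_1^{a_1+1},…,x_n^{a_n+1}⟩` attached to the exponent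
vector `a`. -/
noncomputable def annMon (K : Type*) [Field K] {n : ℕ} (a : Fin n →₀ ℕ) :
    Ideal (MvPolynomial (Fin n) K) :=
  Ideal.span (Set.range fun i => (X i : MvPolynomial (Fin n) K) ^ (a i + 1))

/-- The Hilbert function of a graded quotient `S/I`. -/
noncomputable def hilb (K : Type*) [Field K] {n : ℕ} (I : Ideal (MvPolynomial (Fin n) K))
    (j : ℕ) : ℕ :=
  Module.finrank K
    (Submodule.map (Ideal.Quotient.mkₐ K I).toLinearMap
      (MvPolynomial.homogeneousSubmodule (Fin n) K j))

/-!
Modulo a monomial ideal the standard monomials of degree `d` (those divisible by no generator)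
form a basis of the degree-`d` component, so `h_d(S/I)` counts them. By linearity of expectation,
`E[h_d]` is the sum over `|a| = d` of the probability that no divisor of `x^a` of degree
`1, …, D` is drawn as a generator, namely `q ^ #{divisors of x^a of degree 1..D}`. The divisors
of `x^a` number `(a_1+1)⋯(a_n+1)`: one of degree `0` (the source of the factor `q⁻¹`), those of
degree `1..D`, and, in each degree `j > D`, the `h_{B_a}(j)` monomials that form the basis of
`(B_a)_j`.
-/

namespace MvPolynomial

variable {σ R K : Type*} [CommSemiring R] [Field K]

lemma restrictSupport_union (s t : Set (σ →₀ ℕ)) :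
    restrictSupport R (s ∪ t) = restrictSupport R s ⊔ restrictSupport R t := by
  simp only [restrictSupport_eq_span, Set.image_union, Submodule.span_union]

lemma disjoint_restrictSupport {s t : Set (σ →₀ ℕ)} (h : Disjoint s t) :
    Disjoint (restrictSupport R s) (restrictSupport R t) := by
  rw [Submodule.disjoint_def]
  intro f hs ht
  rw [mem_restrictSupport_iff] at hs ht
  have hst := Set.subset_inter hs ht
  rwa [h.inter_eq, Set.subset_empty_iff, Finset.coe_eq_empty, support_eq_empty] at hst

lemma finrank_restrictSupport (s : Finset (σ →₀ ℕ)) :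
    Module.finrank K (restrictSupport K (s : Set (σ →₀ ℕ))) = s.card := by
  simp [Module.finrank_eq_card_basis (basisRestrictSupport K _)]

lemma finrank_map_restrictSupport {V : Type*} [AddCommGroup V] [Module K V]
    (Q : MvPolynomial σ K →ₗ[K] V) {t : Set (σ →₀ ℕ)} [DecidablePred (· ∈ t)]
    (hQ : LinearMap.ker Q = restrictSupport K t) (s : Finset (σ →₀ ℕ)) :
    Module.finrank K ((restrictSupport K s).map Q) = (s.filter (· ∉ t)).card := by
  set s' := s.filter (· ∉ t)
  have hmap : (restrictSupport K s).map Q = (restrictSupport K s').map Q := by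
    refine le_antisymm ?_ <|
      Submodule.map_mono (restrictSupport_mono K (Finset.coe_subset.mpr (s.filter_subset _)))
    rw [LinearMap.map_le_map_iff, hQ, ← restrictSupport_union]
    refine restrictSupport_mono K fun b hb => ?_
    by_cases hbt : b ∈ t
    · exact Or.inr hbt
    · exact Or.inl (Finset.mem_coe.mpr (Finset.mem_filter.mpr ⟨hb, hbt⟩))
  have hinj : Function.Injective (Q.domRestrict (restrictSupport K s')) := by
    rw [LinearMap.injective_domRestrict_iff, hQ]
    exact disjoint_restrictSupport
      (Set.disjoint_left.mpr fun b hb => (Finset.mem_filter.mp hb).2)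
  rw [hmap, ← LinearMap.range_domRestrict, LinearMap.finrank_range_of_inj hinj,
    finrank_restrictSupport]

lemma homogeneousSubmodule_eq_restrictSupport (d : ℕ) :
    homogeneousSubmodule σ R d = restrictSupport R {b | b.degree = d} := by
  ext f
  simp only [mem_homogeneousSubmodule, mem_restrictSupport_iff, IsHomogeneous,
    IsWeightedHomogeneous, Set.subset_def, Finset.mem_coe, mem_support_iff,
    Set.mem_ofPred_eq, Finsupp.degree_eq_weight_one]
  rfl

lemma restrictScalars_span_monomial (s : Set (σ →₀ ℕ)) :
    (Ideal.span ((monomial · (1 : R)) '' s)).restrictScalars R =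
      restrictSupport R {b | ∃ g ∈ s, g ≤ b} := by
  ext f
  simp only [Submodule.restrictScalars_mem, mem_ideal_span_monomial_image,
    mem_restrictSupport_iff, Set.subset_def, Finset.mem_coe, Set.mem_ofPred_eq]

lemma ker_mkₐ_toLinearMap {A : Type*} [CommRing A] [Algebra K A] (I : Ideal A) :
    LinearMap.ker (Ideal.Quotient.mkₐ K I).toLinearMap = I.restrictScalars K := by
  ext f
  simp [Ideal.Quotient.eq_zero_iff_mem]

end MvPolynomial

lemma Finset.sum_powerset_filter_forall_not {α R : Type*} [CommSemiring R] (M : Finset α)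
    (P : α → Prop) [DecidablePred P] (p q : R) (hpq : p + q = 1) :
    ∑ G ∈ M.powerset.filter (fun G => ∀ x ∈ G, ¬ P x), p ^ G.card * q ^ (M.card - G.card) =
      q ^ (M.filter P).card := by
  have hfilter : M.powerset.filter (fun G => ∀ x ∈ G, ¬ P x) = (M.filter (¬ P ·)).powerset := by
    ext G
    simp only [Finset.mem_filter, Finset.mem_powerset, Finset.subset_iff]
    grind
  have hcard := Finset.card_filter_add_card_filter_not (s := M) P
  rw [hfilter, ← mul_one (q ^ _), ← one_pow (M.filter (¬ P ·)).card, ← hpq,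
    ← Finset.sum_pow_mul_eq_add_pow, Finset.mul_sum]
  refine Finset.sum_congr rfl fun G hG => ?_
  have hG := Finset.card_le_card (Finset.mem_powerset.mp hG)
  rw [show M.card - G.card = (M.filter P).card + ((M.filter (¬ P ·)).card - G.card) by omega,
    pow_add]
  ring

lemma pow_eq_inv_mul_pow_succ {G₀ : Type*} [GroupWithZero G₀] (q : G₀) {k : ℕ} (hk : k ≠ 0) :
    q ^ k = q⁻¹ * q ^ (k + 1) := by
  rcases eq_or_ne q 0 with rfl | hq
  · simp [zero_pow hk]
  · rw [pow_succ', inv_mul_cancel_left₀ hq]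

lemma Finsupp.card_Iic_eq_prod {σ : Type*} [Fintype σ] [DecidableEq σ] (a : σ →₀ ℕ) :
    (Finset.Iic a).card = ∏ i, (a i + 1) := by
  rw [Finsupp.card_Iic, Finset.prod_subset (Finset.subset_univ a.support)]
  · simp
  · intro i _ hi
    simp [Finsupp.notMem_support_iff.mp hi]

lemma mem_Mon {n d : ℕ} {a : Fin n →₀ ℕ} : a ∈ Mon n d ↔ a.degree = d := by
  simp [Mon, Finset.Nat.mem_antidiagonalTuple, Finsupp.degree_eq_sum]

lemma hilb_eq_card_filter {K : Type*} [Field K] {n : ℕ} (I : Ideal (MvPolynomial (Fin n) K))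
    {t : Set (Fin n →₀ ℕ)} [DecidablePred (· ∈ t)]
    (hI : I.restrictScalars K = restrictSupport K t) (d : ℕ) :
    hilb K I d = ((Mon n d).filter (· ∉ t)).card := by
  have hMon : {b : Fin n →₀ ℕ | b.degree = d} = Mon n d := by ext; simp [mem_Mon]
  rw [hilb, homogeneousSubmodule_eq_restrictSupport, hMon,
    finrank_map_restrictSupport _ ((ker_mkₐ_toLinearMap I).trans hI)]

lemma hilb_spanOf {K : Type*} [Field K] {n : ℕ} (G : Finset (Fin n →₀ ℕ)) (d : ℕ) :
    hilb K (spanOf K G) d = ((Mon n d).filter fun a => ∀ g ∈ G, ¬ g ≤ a).card := by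
  rw [hilb_eq_card_filter (spanOf K G) (restrictScalars_span_monomial _) d]
  simp

lemma restrictScalars_annMon (K : Type*) [Field K] {n : ℕ} (a : Fin n →₀ ℕ) :
    (annMon K a).restrictScalars K = restrictSupport K {b | ¬ b ≤ a} := by
  have hgen : Set.range (fun i => (X i : MvPolynomial (Fin n) K) ^ (a i + 1)) =
      (monomial · 1) '' Set.range fun i => Finsupp.single i (a i + 1) := by
    rw [← Set.range_comp]
    simp [Function.comp_def, X_pow_eq_monomial]
  rw [annMon, hgen, restrictScalars_span_monomial]
  congr 1
  ext b
  simp only [Set.mem_ofPred_eq, Set.mem_range, exists_exists_eq_and, Finsupp.single_le_iff,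
    Nat.add_one_le_iff]
  simp only [Finsupp.le_def, not_forall, not_le]

lemma hilb_annMon {K : Type*} [Field K] {n : ℕ} (a : Fin n →₀ ℕ) (j : ℕ) :
    hilb K (annMon K a) j = ((Mon n j).filter (· ≤ a)).card := by
  rw [hilb_eq_card_filter _ (restrictScalars_annMon K a) j]
  simp

lemma mem_MonLE {n D : ℕ} {g : Fin n →₀ ℕ} : g ∈ MonLE n D ↔ 1 ≤ g.degree ∧ g.degree ≤ D := by
  simp [MonLE, mem_Mon]

lemma filter_Iic_degree_le (n D : ℕ) (a : Fin n →₀ ℕ) :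
    (Finset.Iic a).filter (·.degree ≤ D) = insert 0 ((MonLE n D).filter (· ≤ a)) := by
  ext b
  rcases eq_or_ne b 0 with rfl | hb
  · simp
  · have hdeg : 1 ≤ b.degree :=
      Nat.one_le_iff_ne_zero.mpr ((Finsupp.degree_eq_zero_iff b).not.mpr hb)
    simp [mem_MonLE, hb, hdeg, and_comm]

lemma card_filter_Iic_lt_degree (n D : ℕ) (a : Fin n →₀ ℕ) :
    ((Finset.Iic a).filter (D < ·.degree)).card =
      ∑ j ∈ Finset.Icc (D + 1) a.degree, ((Mon n j).filter (· ≤ a)).card := by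
  rw [Finset.card_eq_sum_card_fiberwise (f := Finsupp.degree) fun b hb => ?_]
  · refine Finset.sum_congr rfl fun j hj => congrArg Finset.card ?_
    ext b
    simp only [Finset.mem_Icc] at hj
    simp only [Finset.mem_filter, Finset.mem_Iic, mem_Mon]
    grind
  · simp only [Finset.coe_filter, Finset.mem_Iic, Set.mem_ofPred_eq] at hb
    simp only [Finset.coe_Icc, Set.mem_Icc]
    exact ⟨hb.2, Finsupp.degree_mono hb.1⟩

lemma prod_add_one_eq_card_filter_MonLE (n D : ℕ) (a : Fin n →₀ ℕ) :
    ∏ i, (a i + 1) = ((MonLE n D).filter (· ≤ a)).card + 1 +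
      ∑ j ∈ Finset.Icc (D + 1) a.degree, ((Mon n j).filter (· ≤ a)).card := by
  have h0 : 0 ∉ (MonLE n D).filter (· ≤ a) := by simp [mem_MonLE]
  rw [← Finsupp.card_Iic_eq_prod, ← Finset.card_filter_add_card_filter_not (·.degree ≤ D),
    filter_Iic_degree_le, Finset.card_insert_of_notMem h0, ← card_filter_Iic_lt_degree]
  simp only [not_le]

lemma filter_MonLE_le_nonempty {n D : ℕ} (hD : 1 ≤ D) {a : Fin n →₀ ℕ} (ha : a ≠ 0) :
    ((MonLE n D).filter (· ≤ a)).Nonempty := by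
  obtain ⟨i, hi⟩ := Finsupp.ne_iff.mp ha
  refine ⟨Finsupp.single i 1, Finset.mem_filter.mpr ⟨mem_MonLE.mpr ?_, ?_⟩⟩
  · simpa using hD
  · exact Finsupp.single_le_iff.mpr (Nat.one_le_iff_ne_zero.mpr hi)

lemma sum_powerset_mul_hilb_spanOf (K : Type*) [Field K] {R : Type*} [CommSemiring R]
    (n D d : ℕ) (p q : R) (hpq : p + q = 1) :
    ∑ G ∈ (MonLE n D).powerset,
        p ^ G.card * q ^ ((MonLE n D).card - G.card) * (hilb K (spanOf K G) d : R) =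
      ∑ a ∈ Mon n d, q ^ ((MonLE n D).filter (· ≤ a)).card := by
  calc _ = ∑ G ∈ (MonLE n D).powerset, ∑ a ∈ Mon n d,
        if ∀ g ∈ G, ¬ g ≤ a then p ^ G.card * q ^ ((MonLE n D).card - G.card) else 0 := by
        refine Finset.sum_congr rfl fun G _ => ?_
        rw [hilb_spanOf, Finset.card_filter, Nat.cast_sum, Finset.mul_sum]
        simp only [Nat.cast_ite, Nat.cast_one, Nat.cast_zero, mul_ite, mul_one, mul_zero]
    _ = ∑ a ∈ Mon n d, ∑ G ∈ (MonLE n D).powerset.filter (fun G => ∀ g ∈ G, ¬ g ≤ a),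
        p ^ G.card * q ^ ((MonLE n D).card - G.card) := by
        rw [Finset.sum_comm]
        simp only [Finset.sum_filter]
    _ = _ := Finset.sum_congr rfl fun a _ =>
        Finset.sum_powerset_filter_forall_not _ (· ≤ a) p q hpq

theorem stmt11_general (K : Type*) [Field K] (n D : ℕ) (hD : 1 ≤ D)
    (p q : ℝ) (hq : q = 1 - p) (d : ℕ) (hd : 1 ≤ d) :
    ∑ G ∈ (MonLE n D).powerset,
        p ^ G.card * q ^ ((MonLE n D).card - G.card) * (hilb K (spanOf K G) d : ℝ)
      = q⁻¹ * ∑ a ∈ Mon n d,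
          q ^ ((∏ i : Fin n, (a i + 1)) -
            ∑ j ∈ Finset.Icc (D + 1) d, hilb K (annMon K a) j) := by
  rw [sum_powerset_mul_hilb_spanOf K n D d p q (by rw [hq]; ring), Finset.mul_sum]
  refine Finset.sum_congr rfl fun a ha => ?_
  have hdeg : a.degree = d := mem_Mon.mp ha
  have ha0 : a ≠ 0 := by
    rintro rfl
    simp at hdeg
    omega
  simp only [hilb_annMon, ← hdeg, prod_add_one_eq_card_filter_MonLE n D a, Nat.add_sub_cancel]
  exact pow_eq_inv_mul_pow_succ q (filter_MonLE_le_nonempty hD ha0).card_pos.ne'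

/-- For an Erdős–Rényi random monomial ideal `I ∼ 𝓘(n,D,p)` with `q = 1-p`, the expected
dimension of the degree-`d` component of `S/I` (for `d ≥ 1`) is
`q⁻¹ ∑_{|a|=d} q^{(a_1+1)⋯(a_n+1) - ∑_{j=D+1}^{|a|} h_{B_a}(j)}`, where
`B_a = S/⟨x_1^{a_1+1},…,x_n^{a_n+1}⟩` and the inner sum is zero when `|a| ≤ D`. -/
theorem stmt11 (K : Type*) [Field K] (n D : ℕ) (hD : 1 ≤ D)
    (p q : ℝ) (hp0 : 0 ≤ p) (hp1 : p ≤ 1) (hq : q = 1 - p) (d : ℕ) (hd : 1 ≤ d) :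
    ∑ G ∈ (MonLE n D).powerset,
        p ^ G.card * q ^ ((MonLE n D).card - G.card) * (hilb K (spanOf K G) d : ℝ)
      = q⁻¹ * ∑ a ∈ Mon n d,
          q ^ ((∏ i : Fin n, (a i + 1)) -
            ∑ j ∈ Finset.Icc (D + 1) d, hilb K (annMon K a) j) :=
  stmt11_general K n D hD p q hq d hd
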